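/- arXiv:2007.09783 — 2 statements merged into one kernel-verified Lean document; each statement's English description precedes it below -/
import Mathlib

section
/- Let $A$ be a unital C*-algebra, let $G$ be a finite group, and let $\alpha: G \to \mathrm{Aut}(A)$ be a strictly approximately inner action. Then for $a, b \in A_+$, one has $a \precsim_A b$ if and only if $a \precsim_{C^*(G, A, \alpha)} b$, where on the right $a$ and $b$ are regarded as elements of the crossed product via the canonical inclusion. -/
open Filter Topology
open scoped BigOperators

/-- Cuntz subequivalence: `a ≾ b` iff there is a sequence `(cₙ)` with `cₙ b cₙ* → a`. -/
def CuntzSub {B : Type*} [Mul B] [Star B] [TopologicalSpace B] (a b : B) : Prop :=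
  ∃ c : ℕ → B, Tendsto (fun n => c n * b * star (c n)) atTop (𝓝 a)

/-- A realization of the crossed product `C*(G, A, α)` of a finite group action. -/
structure CrossedProduct (G : Type*) [Group G] [Fintype G]
    (A B : Type*) [CStarAlgebra A] [CStarAlgebra B] (α : G → A → A) where
  ι : A →⋆ₐ[ℂ] B
  u : G → B
  u_mul : ∀ g h : G, u g * u h = u (g * h)
  u_star : ∀ g : G, star (u g) = u g⁻¹
  u_one : u 1 = 1
  ι_isometry : ∀ a : A, ‖ι a‖ = ‖a‖
  covariant : ∀ (g : G) (a : A), u g * ι a * star (u g) = ι (α g a)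
  spans : ∀ b : B, ∃ f : G → A, b = ∑ g : G, ι (f g) * u g
  coeff_norm_le : ∀ (f : G → A) (g : G), ‖f g‖ ≤ ‖∑ h : G, ι (f h) * u h‖

/-- Strict approximate innerness of an action of a finite group on a unital C*-algebra. -/
def StrictlyApproxInner {G : Type*} [Group G] {A : Type*} [CStarAlgebra A]
    (α : G → A → A) : Prop :=
  ∀ (F : Finset A) (ε : ℝ), 0 < ε → ∃ z : G →* unitary A,
    ∀ g : G, ∀ a ∈ F, ‖α g a - (z g : A) * a * star ((z g : A))‖ < ε

open Finset

/-! Write `c ∈ C*(G, A, α)` as `∑ ι (f g) u_g`. The coefficients of `c b c*` are the elements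
`∑ₕ f(kh) α_{kh}(b) α_k(f(h)*)` of `A`, and by the coefficient bound each lies within
`‖c b c* - a‖` of the corresponding coefficient of `a`. Conjugating `b` instead by
`d = ∑ f g z_g ∈ A`, for a unitary representation `z` implementing `α` approximately on `b` and
the `f(h)*`, gives the same expansion with `α_g` replaced by `Ad z_g`. Hence `‖d b d* - a‖` is at
most `|G| ‖c b c* - a‖` plus an arbitrarily small error. -/

theorem cuntzSub_iff_forall_exists_norm_sub_lt {R : Type*} [NonUnitalNormedRing R] [StarRing R]
    (a b : R) : CuntzSub a b ↔ ∀ ε : ℝ, 0 < ε → ∃ c : R, ‖c * b * star c - a‖ < ε := by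
  constructor
  · rintro ⟨c, hc⟩ ε hε
    obtain ⟨N, hN⟩ := Metric.tendsto_atTop.mp hc ε hε
    exact ⟨c N, by simpa only [dist_eq_norm] using hN N le_rfl⟩
  · intro h
    choose c hc using fun n : ℕ => h (1 / (n + 1)) (by positivity)
    refine ⟨c, tendsto_iff_norm_sub_tendsto_zero.mpr ?_⟩
    exact squeeze_zero (fun n => norm_nonneg _) (fun n => (hc n).le)
      tendsto_one_div_add_atTop_nhds_zero_nat

theorem CuntzSub.map {R S F : Type*} [Mul R] [Star R] [TopologicalSpace R] [Mul S] [Star S]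
    [TopologicalSpace S] [FunLike F R S] [MulHomClass F R S] [StarHomClass F R S]
    (φ : F) (hφ : Continuous φ) {a b : R} (h : CuntzSub a b) : CuntzSub (φ a) (φ b) := by
  obtain ⟨c, hc⟩ := h
  refine ⟨fun n => φ (c n), ?_⟩
  simpa only [Function.comp_def, map_mul, map_star] using (hφ.tendsto a).comp hc

def innerAct {G R : Type*} [Monoid G] [Monoid R] [StarMul R] (z : G →* unitary R) (g : G)
    (r : R) : R :=
  (z g : R) * r * star (z g : R)

theorem sum_single_mul {G R : Type*} [One G] [Fintype G] [DecidableEq G] [Semiring R] (a : R)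
    {u : G → R} (hu : u 1 = 1) : ∑ k, (Pi.single 1 a : G → R) k * u k = a := by
  rw [Fintype.sum_eq_single 1 fun k hk => by rw [Pi.single_eq_of_ne hk, zero_mul]]
  rw [Pi.single_eq_same, hu, mul_one]

section Coefficients

variable {G R : Type*} [Group G] [Fintype G]

/-- The `k`-th coefficient of `x y x*` in a crossed product by `β`, where `x = ∑ x_g u_g`. -/
def crossedConjCoeff [Semiring R] [StarRing R] (β : G → R → R) (x : G → R) (y : R) (k : G) :
    R :=
  ∑ h, x (k * h) * β (k * h) y * β k (star (x h))

theorem sum_mul_unitary_mul_mul_star [Semiring R] [StarRing R] (z : G →* unitary R)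
    (x : G → R) (y : R) :
    (∑ g, x g * z g) * y * star (∑ g, x g * z g)
      = ∑ k, crossedConjCoeff (innerAct z) x y k * z k := by
  have reindex (T : G → G → R) : ∑ g, ∑ h, T g h = ∑ k, ∑ h, T (k * h) h := by
    rw [sum_comm, sum_comm (f := fun k h => T (k * h) h)]
    exact sum_congr rfl fun h _ => (Fintype.sum_equiv (Equiv.mulRight h) _ _ fun _ => rfl).symm
  have term (k h : G) : x (k * h) * z (k * h) * y * star (x h * z h)
      = x (k * h) * innerAct z (k * h) y * innerAct z k (star (x h)) * z k := by
    have cancel (g : G) (r : R) : star (z g : R) * (z g * r) = r := by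
      rw [← mul_assoc, Unitary.coe_star_mul_self, one_mul]
    simp only [innerAct, map_mul, Submonoid.coe_mul, star_mul, mul_assoc, cancel,
      Unitary.coe_star_mul_self, mul_one]
  rw [star_sum, sum_mul, sum_mul_sum, reindex]
  simp only [term, crossedConjCoeff, sum_mul]

theorem tendsto_crossedConjCoeff [Semiring R] [StarRing R] [TopologicalSpace R]
    [IsTopologicalSemiring R] {I : Type*} {l : Filter I} {β : I → G → R → R} {β₀ : G → R → R}
    {x : G → R} {y : R} (hy : ∀ g, Tendsto (fun i => β i g y) l (𝓝 (β₀ g y)))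
    (hx : ∀ g h, Tendsto (fun i => β i g (star (x h))) l (𝓝 (β₀ g (star (x h))))) (k : G) :
    Tendsto (fun i => crossedConjCoeff (β i) x y k) l (𝓝 (crossedConjCoeff β₀ x y k)) :=
  tendsto_finsetSum _ fun _ _ => ((hy _).const_mul _).mul (hx _ _)

end Coefficients

theorem StrictlyApproxInner.exists_tendsto {G A : Type*} [Group G] [CStarAlgebra A]
    {α : G → A → A} (hα : StrictlyApproxInner α) (F : Finset A) :
    ∃ z : ℕ → G →* unitary A, ∀ g, ∀ w ∈ F,
      Tendsto (fun n => innerAct (z n) g w) atTop (𝓝 (α g w)) := by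
  choose z hz using fun n : ℕ => hα F (1 / (n + 1)) (by positivity)
  refine ⟨z, fun g w hw => tendsto_iff_norm_sub_tendsto_zero.2 ?_⟩
  refine squeeze_zero (fun _ => norm_nonneg _) (fun n => ?_)
    tendsto_one_div_add_atTop_nhds_zero_nat
  rw [norm_sub_rev]
  exact (hz n g w hw).le

namespace CrossedProduct

variable {G A B : Type*} [Group G] [Fintype G] [CStarAlgebra A] [CStarAlgebra B]
  {α : G → A → A} (cp : CrossedProduct G A B α)

def unitaryRep : G →* unitary B where
  toFun g := ⟨cp.u g, by rw [Unitary.mem_iff, cp.u_star, cp.u_mul, cp.u_mul, inv_mul_cancel,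
    mul_inv_cancel, cp.u_one]; exact ⟨rfl, rfl⟩⟩
  map_one' := Subtype.ext cp.u_one
  map_mul' g h := Subtype.ext (cp.u_mul g h).symm

@[simp]
theorem coe_unitaryRep (g : G) : (cp.unitaryRep g : B) = cp.u g := rfl

theorem innerAct_unitaryRep_ι (g : G) (x : A) :
    innerAct cp.unitaryRep g (cp.ι x) = cp.ι (α g x) :=
  cp.covariant g x

theorem continuous_ι : Continuous cp.ι :=
  (AddMonoidHomClass.isometry_of_norm cp.ι cp.ι_isometry).continuous

theorem sum_mul_ι_mul_star_sum (f : G → A) (b : A) :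
    (∑ g, cp.ι (f g) * cp.u g) * cp.ι b * star (∑ g, cp.ι (f g) * cp.u g)
      = ∑ k, cp.ι (crossedConjCoeff α f b k) * cp.u k := by
  simpa only [coe_unitaryRep, crossedConjCoeff, map_sum, map_mul, ← map_star,
    innerAct_unitaryRep_ι] using
    sum_mul_unitary_mul_mul_star cp.unitaryRep (fun g => cp.ι (f g)) (cp.ι b)

theorem norm_crossedConjCoeff_sub_single_le [DecidableEq G] (f : G → A) (a b : A) (k : G) :
    ‖crossedConjCoeff α f b k - (Pi.single 1 a : G → A) k‖
      ≤ ‖(∑ g, cp.ι (f g) * cp.u g) * cp.ι b * star (∑ g, cp.ι (f g) * cp.u g) - cp.ι a‖ := by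
  have hsingle : ∑ k, cp.ι ((Pi.single 1 a : G → A) k) * cp.u k = cp.ι a := by
    rw [Fintype.sum_eq_single 1 fun k hk => by rw [Pi.single_eq_of_ne hk, map_zero, zero_mul],
      Pi.single_eq_same, cp.u_one, mul_one]
  rw [sum_mul_ι_mul_star_sum, ← hsingle, ← sum_sub_distrib]
  simp only [← sub_mul, ← map_sub]
  exact cp.coeff_norm_le (fun k => crossedConjCoeff α f b k - (Pi.single 1 a : G → A) k) k

theorem exists_norm_mul_mul_star_sub_lt (hα : StrictlyApproxInner α) (a b : A) (c : B)
    {δ : ℝ} (hδ : 0 < δ) :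
    ∃ d : A, ‖d * b * star d - a‖ < Fintype.card G * ‖c * cp.ι b * star c - cp.ι a‖ + δ := by
  classical
  obtain ⟨f, rfl⟩ := cp.spans c
  obtain ⟨z, hz⟩ := hα.exists_tendsto (insert b (univ.image (star ∘ f)))
  have hlim : Tendsto
      (fun n => ∑ k, ‖crossedConjCoeff (innerAct (z n)) f b k - (Pi.single 1 a : G → A) k‖)
      atTop (𝓝 (∑ k, ‖crossedConjCoeff α f b k - (Pi.single 1 a : G → A) k‖)) :=
    tendsto_finsetSum _ fun k _ => ((tendsto_crossedConjCoeff
      (fun g => hz g b (mem_insert_self _ _))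
      (fun g h => hz g _ (mem_insert_of_mem (mem_image_of_mem _ (mem_univ h)))) k).sub_const _).norm
  have hbound : ∑ k, ‖crossedConjCoeff α f b k - (Pi.single 1 a : G → A) k‖
      ≤ Fintype.card G * ‖(∑ g, cp.ι (f g) * cp.u g) * cp.ι b
          * star (∑ g, cp.ι (f g) * cp.u g) - cp.ι a‖ := by
    refine (sum_le_sum fun k _ => cp.norm_crossedConjCoeff_sub_single_le f a b k).trans_eq ?_
    rw [sum_const, card_univ, nsmul_eq_mul]
  obtain ⟨n, hn⟩ :=
    (hlim.eventually (gt_mem_nhds (hbound.trans_lt (lt_add_of_pos_right _ hδ)))).exists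
  refine ⟨∑ g, f g * z n g, lt_of_le_of_lt ?_ hn⟩
  have hz1 : ((z n 1 : unitary A) : A) = 1 := by rw [map_one]; rfl
  rw [sum_mul_unitary_mul_mul_star]
  calc ‖∑ k, crossedConjCoeff (innerAct (z n)) f b k * z n k - a‖
      = ‖∑ k, (crossedConjCoeff (innerAct (z n)) f b k - (Pi.single 1 a : G → A) k)
          * z n k‖ := by
        rw [sum_congr rfl fun k _ => sub_mul _ _ _, sum_sub_distrib,
          sum_single_mul a (u := fun k => (z n k : A)) hz1]
    _ ≤ _ := (norm_sum_le _ _).trans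
        (sum_le_sum fun k _ => (CStarRing.norm_mul_coe_unitary _ _).le)

end CrossedProduct

theorem cuntzSub_iff_cuntzSub_crossedProduct_general
    {G : Type*} [Group G] [Fintype G] {A B : Type*} [CStarAlgebra A] [CStarAlgebra B]
    (α : G → (A ≃⋆ₐ[ℂ] A))
    (cp : CrossedProduct G A B (fun g a => α g a))
    (hsai : StrictlyApproxInner (fun g a => α g a))
    (a b : A) :
    CuntzSub a b ↔ CuntzSub (cp.ι a) (cp.ι b) := by
  refine ⟨CuntzSub.map cp.ι cp.continuous_ι, fun h => ?_⟩
  rw [cuntzSub_iff_forall_exists_norm_sub_lt] at h ⊢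
  intro ε hε
  have hG : (0 : ℝ) < Fintype.card G := by exact_mod_cast Fintype.card_pos
  obtain ⟨c, hc⟩ := h (ε / (2 * Fintype.card G)) (by positivity)
  obtain ⟨d, hd⟩ := cp.exists_norm_mul_mul_star_sub_lt hsai a b c (half_pos hε)
  refine ⟨d, hd.trans_le ?_⟩
  calc Fintype.card G * ‖c * cp.ι b * star c - cp.ι a‖ + ε / 2
      ≤ Fintype.card G * (ε / (2 * Fintype.card G)) + ε / 2 := by gcongr
    _ = ε := by field_simp; ring

/-- Let `α` be a strictly approximately inner action of a finite group `G`
on a unital C*-algebra `A`.  For `a, b ∈ A₊`, one has `a ≾_A b` iff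
`a ≾_{C*(G,A,α)} b` via the canonical inclusion. -/
theorem cuntzSub_iff_cuntzSub_crossedProduct
    {G : Type*} [Group G] [Fintype G] {A B : Type*} [CStarAlgebra A] [CStarAlgebra B]
    [PartialOrder A] [StarOrderedRing A]
    (α : G → (A ≃⋆ₐ[ℂ] A))
    (hα : ∀ (g h : G) (a : A), α (g * h) a = α g (α h a))
    (cp : CrossedProduct G A B (fun g a => α g a))
    (hsai : StrictlyApproxInner (fun g a => α g a))
    (a b : A) (ha : 0 ≤ a) (hb : 0 ≤ b) :
    CuntzSub a b ↔ CuntzSub (cp.ι a) (cp.ι b) :=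
  cuntzSub_iff_cuntzSub_crossedProduct_general α cp hsai a b
end

section
/- Let $A$ be a C*-algebra, let $a \in A_+$ with $\|a\| \leq 1$, let $\varepsilon > 0$, and let $g \in A$ with $0 \leq g \leq 1$. Then $(a-\varepsilon)_+ \precsim_A ((1-g)a(1-g) - \varepsilon)_+ \oplus g$ in $M_2(A)$. -/
open Filter Topology

/-- `(a - ε)₊`, obtained by applying `t ↦ max 0 (t - ε)` to `a` via continuous functional
calculus. -/
noncomputable def cutdown {A : Type*} [CStarAlgebra A] (a : A) (ε : ℝ) : A :=
  cfc (fun t : ℝ => max 0 (t - ε)) a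

/-- `a ⊕ b = diag(a, b) ∈ M₂(A)`. -/
def diag2 {A : Type*} [Zero A] (a b : A) : Matrix (Fin 2) (Fin 2) A :=
  Matrix.of ![![a, 0], ![0, b]]

section Aux

open Polynomial

set_option linter.unusedSectionVars false
set_option linter.unusedVariables false

namespace CuntzLemmaAux

variable {A : Type*} [CStarAlgebra A] [PartialOrder A] [StarOrderedRing A]

/-- key approximation: if `w* w ≤ b` then `w w*` is approximately `c b c*`. -/
lemma approx (w b : A) (hb : 0 ≤ b) (hle : star w * w ≤ b) {δ : ℝ} (hδ : 0 < δ) :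
    ∃ c : A, ‖w * star w - c * b * star c‖ ≤ δ := by
  have hb_sa : IsSelfAdjoint b := .of_nonneg hb
  have hσ : ∀ t ∈ spectrum ℝ b, 0 ≤ t := fun t ht => spectrum_nonneg_of_nonneg hb ht
  set u : ℝ → ℝ := fun t => Real.sqrt ((t + δ)⁻¹) with hu
  have hcont : ContinuousOn u (spectrum ℝ b) := by
    apply Real.continuous_sqrt.comp_continuousOn
    apply ContinuousOn.inv₀ (by fun_prop)
    intro t ht
    have := hσ t ht
    positivity
  set e : A := cfc u b with he
  have he_sa : IsSelfAdjoint e := cfc_predicate u b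
  refine ⟨w * e, ?_⟩
  have hmul1 : ContinuousOn (fun t => u t * t) (spectrum ℝ b) := hcont.mul continuousOn_id
  have hmul2 : ContinuousOn (fun t => u t * t * u t) (spectrum ℝ b) := hmul1.mul hcont
  have key : e * b * e = cfc (fun t => u t * t * u t) b := by
    rw [cfc_mul _ _ b hmul1 hcont, cfc_mul u (fun t : ℝ => t) b hcont continuousOn_id, cfc_id' ℝ b, he]
  have hsplit : w * star w - (w * e) * b * star (w * e)
      = w * (1 - cfc (fun t => u t * t * u t) b) * star w := by
    rw [star_mul, he_sa.star_eq, ← key]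
    noncomm_ring
  have hvcont : ContinuousOn (fun t => Real.sqrt (δ * (t + δ)⁻¹)) (spectrum ℝ b) := by
    apply Real.continuous_sqrt.comp_continuousOn
    exact continuousOn_const.mul (ContinuousOn.inv₀ (by fun_prop)
      fun t ht => by have := hσ t ht; positivity)
  set v : ℝ → ℝ := fun t => Real.sqrt (δ * (t + δ)⁻¹) with hv
  set ρ : A := cfc v b with hρ
  have hρ_sa : IsSelfAdjoint ρ := cfc_predicate v b
  have heq2 : cfc (fun t => 1 - u t * t * u t) b = ρ * ρ := by
    rw [hρ, ← cfc_mul v v b hvcont hvcont]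
    apply cfc_congr
    intro t ht
    have ht0 := hσ t ht
    have hne : t + δ ≠ 0 := by positivity
    have h1 : u t * u t = (t + δ)⁻¹ := Real.mul_self_sqrt (by positivity)
    have h2 : v t * v t = δ * (t + δ)⁻¹ := Real.mul_self_sqrt (by positivity)
    have h3 : u t * t * u t = t * (t + δ)⁻¹ := by
      rw [mul_comm (u t) t, mul_assoc, h1]
    show 1 - u t * t * u t = v t * v t
    rw [h3, h2]
    field_simp
    ring
  have hone2 : (1 : A) - cfc (fun t => u t * t * u t) b = ρ * ρ := by
    rw [← heq2,
      cfc_sub (fun _ : ℝ => (1 : ℝ)) (fun t => u t * t * u t) b continuousOn_const hmul2,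
      cfc_const_one ℝ b]
  have final_eq : w * star w - (w * e) * b * star (w * e) = (w * ρ) * star (w * ρ) := by
    rw [hsplit, hone2, star_mul, hρ_sa.star_eq]
    noncomm_ring
  rw [final_eq, CStarRing.norm_self_mul_star, ← CStarRing.norm_star_mul_self]
  have hconj : star (w * ρ) * (w * ρ) ≤ ρ * b * ρ := by
    have h1 : star (w * ρ) * (w * ρ) = ρ * (star w * w) * ρ := by
      rw [star_mul, hρ_sa.star_eq]; noncomm_ring
    rw [h1]
    exact hρ_sa.conjugate_le_conjugate hle
  have hnn : 0 ≤ star (w * ρ) * (w * ρ) := star_mul_self_nonneg _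
  refine le_trans (CStarAlgebra.norm_le_norm_of_nonneg_of_le hnn hconj) ?_
  have hρbρ : ρ * b * ρ = cfc (fun t => v t * t * v t) b := by
    have hvmul1 : ContinuousOn (fun t => v t * t) (spectrum ℝ b) := hvcont.mul continuousOn_id
    rw [cfc_mul _ _ b hvmul1 hvcont,
      cfc_mul v (fun t : ℝ => t) b hvcont continuousOn_id, cfc_id' ℝ b, hρ]
  rw [hρbρ]
  refine norm_cfc_le hδ.le fun t ht => ?_
  have ht0 := hσ t ht
  have h2 : v t * v t = δ * (t + δ)⁻¹ := Real.mul_self_sqrt (by positivity)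
  have h3 : v t * t * v t = δ * (t * (t + δ)⁻¹) := by
    rw [mul_comm (v t) t, mul_assoc, h2]; ring
  rw [h3, Real.norm_eq_abs, abs_of_nonneg (by positivity)]
  have ht1 : t * (t + δ)⁻¹ ≤ 1 := by
    rw [← div_eq_mul_inv, div_le_one (by positivity)]
    linarith
  calc δ * (t * (t + δ)⁻¹) ≤ δ * 1 := mul_le_mul_of_nonneg_left ht1 hδ.le
    _ = δ := mul_one δ


lemma cuntz_of_le (w b : A) (hb : 0 ≤ b) (hle : star w * w ≤ b) :
    CuntzSub (w * star w) b := by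
  have key := fun n : ℕ => approx w b hb hle (δ := 1 / (n + 1)) (by positivity)
  choose c hc using key
  refine ⟨c, ?_⟩
  rw [tendsto_iff_dist_tendsto_zero]
  refine squeeze_zero (fun n => dist_nonneg) (fun n => ?_) tendsto_one_div_add_atTop_nhds_zero_nat
  rw [dist_eq_norm, ← norm_neg, neg_sub]
  exact hc n

lemma cuntz_trans {x y z : A} (h1 : CuntzSub x y) (h2 : CuntzSub y z) : CuntzSub x z := by
  obtain ⟨c, hc⟩ := h1
  obtain ⟨d, hd⟩ := h2
  have key : ∀ n : ℕ, ∃ e : A,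
      dist (e * z * star e) x ≤ 1 / (n + 1) + dist (c n * y * star (c n)) x := by
    intro n
    have ht : Tendsto (fun m => c n * (d m * z * star (d m)) * star (c n)) atTop
        (𝓝 (c n * y * star (c n))) := (hd.const_mul (c n)).mul_const (star (c n))
    obtain ⟨N, hN⟩ := Metric.tendsto_atTop.mp ht (1 / (n + 1)) (by positivity)
    refine ⟨c n * d N, ?_⟩
    have h' := (hN N le_rfl).le
    have heq : (c n * d N) * z * star (c n * d N)
        = c n * (d N * z * star (d N)) * star (c n) := by
      rw [star_mul]; noncomm_ring
    rw [heq]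
    exact (dist_triangle _ (c n * y * star (c n)) x).trans (add_le_add h' le_rfl)
  choose e he using key
  refine ⟨e, ?_⟩
  rw [tendsto_iff_dist_tendsto_zero]
  refine squeeze_zero (fun n => dist_nonneg) (fun n => he n) ?_
  have := tendsto_one_div_add_atTop_nhds_zero_nat.add (tendsto_iff_dist_tendsto_zero.mp hc)
  simpa using this

lemma cuntz_of_tendsto {x y : A} (xs : ℕ → A) (hxs : ∀ k, CuntzSub (xs k) y)
    (hlim : Tendsto xs atTop (𝓝 x)) : CuntzSub x y := by
  have key : ∀ k : ℕ, ∃ c : A, dist (c * y * star c) (xs k) ≤ 1 / (k + 1) := by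
    intro k
    obtain ⟨c, hc⟩ := hxs k
    obtain ⟨N, hN⟩ := Metric.tendsto_atTop.mp hc (1 / (k + 1)) (by positivity)
    exact ⟨c N, (hN N le_rfl).le⟩
  choose c hc using key
  refine ⟨c, ?_⟩
  rw [tendsto_iff_dist_tendsto_zero]
  refine squeeze_zero (fun n => dist_nonneg)
    (fun n => (dist_triangle _ (xs n) x).trans (add_le_add (hc n) le_rfl)) ?_
  have := tendsto_one_div_add_atTop_nhds_zero_nat.add (tendsto_iff_dist_tendsto_zero.mp hlim)
  simpa using this

lemma hpow_aux (x : A) : ∀ n : ℕ, star x * (x * star x) ^ n * x = (star x * x) ^ (n + 1) := by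
  intro n
  induction n with
  | zero => simp
  | succ n ih =>
    have h1 : (x * star x) ^ (n + 1) = x * star x * (x * star x) ^ n := by
      rw [pow_succ']
    calc star x * (x * star x) ^ (n + 1) * x
        = (star x * x) * (star x * (x * star x) ^ n * x) := by rw [h1]; noncomm_ring
      _ = (star x * x) * (star x * x) ^ (n + 1) := by rw [ih]
      _ = (star x * x) ^ (n + 2) := by rw [← pow_succ']

set_option linter.unusedSectionVars false

lemma hpoly_aux (x : A) (q : ℝ[X]) :
    star x * (aeval (x * star x) q) * x = aeval (star x * x) (X * q) := by
  induction q using Polynomial.induction_on' with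
  | add p q hp hq => rw [map_add, mul_add X p q, map_add, ← hp, ← hq]; noncomm_ring
  | monomial n r =>
    rw [X_mul_monomial, aeval_monomial, aeval_monomial, ← Algebra.smul_def, ← Algebra.smul_def,
      mul_smul_comm, smul_mul_assoc, hpow_aux x n]

lemma exists_poly_near (R δ : ℝ) (hδ : 0 < δ) (F : ℝ → ℝ) (hF : Continuous F) :
    ∃ q : ℝ[X], ∀ t ∈ Set.Icc (-R) R, |F t - q.eval t| ≤ δ := by
  obtain ⟨q, hq⟩ := exists_polynomial_near_continuousMap (-R) R
    ⟨fun t => F t.1, hF.comp continuous_subtype_val⟩ δ hδ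
  refine ⟨q, fun t ht => ?_⟩
  have h1 := ContinuousMap.norm_coe_le_norm
    (q.toContinuousMapOn (Set.Icc (-R) R) - ⟨fun t => F t.1, hF.comp continuous_subtype_val⟩)
    ⟨t, ht⟩
  have h2 := h1.trans hq.le
  simpa [abs_sub_comm, Real.norm_eq_abs] using h2

lemma star_mul_cfc_mul (x : A) (F : ℝ → ℝ) (hF : Continuous F) :
    star x * cfc F (x * star x) * x = cfc (fun t => t * F t) (star x * x) := by
  obtain hTriv | hNontriv := subsingleton_or_nontrivial A
  · exact Subsingleton.elim _ _
  have sa1 : IsSelfAdjoint (x * star x) := .of_nonneg (mul_star_self_nonneg x)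
  have sa2 : IsSelfAdjoint (star x * x) := .of_nonneg (star_mul_self_nonneg x)
  set L := star x * cfc F (x * star x) * x with hL
  set Rt := cfc (fun t => t * F t) (star x * x) with hRt
  set R := max ‖x * star x‖ ‖star x * x‖ with hR
  have hR0 : 0 ≤ R := le_trans (norm_nonneg _) (le_max_left _ _)
  have hspec1 : spectrum ℝ (x * star x) ⊆ Set.Icc (-R) R := fun t ht => by
    have h := spectrum.norm_le_norm_of_mem ht
    rw [Real.norm_eq_abs] at h
    exact abs_le.mp (h.trans (le_max_left _ _))
  have hspec2 : spectrum ℝ (star x * x) ⊆ Set.Icc (-R) R := fun t ht => by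
    have h := spectrum.norm_le_norm_of_mem ht
    rw [Real.norm_eq_abs] at h
    exact abs_le.mp (h.trans (le_max_right _ _))
  set C := ‖x‖ ^ 2 + R with hCdef
  have hC : 0 ≤ C := by positivity
  have key : ∀ δ : ℝ, 0 < δ → ‖L - Rt‖ ≤ C * δ := by
    intro δ hδ
    obtain ⟨q, hq⟩ := exists_poly_near R δ hδ F hF
    set M := star x * (aeval (x * star x) q) * x with hM
    have hM' : M = cfc (fun t => t * q.eval t) (star x * x) := by
      rw [hM, hpoly_aux x q, ← cfc_polynomial (X * q) (star x * x) sa2]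
      apply cfc_congr
      intro t _
      simp
    have hcut1 : ‖L - M‖ ≤ ‖x‖ ^ 2 * δ := by
      have hsub : L - M
          = star x * (cfc F (x * star x) - cfc q.eval (x * star x)) * x := by
        rw [hL, hM, ← cfc_polynomial q (x * star x) sa1]
        noncomm_ring
      rw [hsub]
      have hd : ‖cfc F (x * star x) - cfc q.eval (x * star x)‖ ≤ δ := by
        rw [← cfc_sub F q.eval (x * star x) hF.continuousOn q.continuous.continuousOn]
        refine norm_cfc_le hδ.le fun t ht => ?_
        rw [Real.norm_eq_abs]
        exact hq t (hspec1 ht)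
      calc ‖star x * (cfc F (x * star x) - cfc q.eval (x * star x)) * x‖
          ≤ ‖star x‖ * ‖cfc F (x * star x) - cfc q.eval (x * star x)‖ * ‖x‖ := by
            refine (norm_mul_le _ _).trans ?_
            exact mul_le_mul_of_nonneg_right (norm_mul_le _ _) (norm_nonneg _)
        _ ≤ ‖x‖ * δ * ‖x‖ := by
            rw [norm_star]
            apply mul_le_mul_of_nonneg_right _ (norm_nonneg _)
            exact mul_le_mul_of_nonneg_left hd (norm_nonneg _)
        _ = ‖x‖ ^ 2 * δ := by ring
    have hcut2 : ‖M - Rt‖ ≤ R * δ := by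
      rw [hM', hRt, ← cfc_sub _ _ (star x * x) (by fun_prop) (by fun_prop)]
      refine norm_cfc_le (by positivity) fun t ht => ?_
      have h2 := hspec2 ht
      rw [Real.norm_eq_abs]
      have h3 : t * Polynomial.eval t q - t * F t = t * (Polynomial.eval t q - F t) := by ring
      rw [h3, abs_mul]
      have habs : |t| ≤ R := abs_le.mpr h2
      have h4 := hq t h2
      rw [abs_sub_comm] at h4
      exact mul_le_mul habs h4 (abs_nonneg _) hR0
    calc ‖L - Rt‖ ≤ ‖L - M‖ + ‖M - Rt‖ := by
          simpa [dist_eq_norm] using dist_triangle L M Rt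
      _ ≤ ‖x‖ ^ 2 * δ + R * δ := add_le_add hcut1 hcut2
      _ = C * δ := by rw [hCdef]; ring
  have hfin : ‖L - Rt‖ ≤ 0 := by
    refine le_of_forall_pos_le_add fun δ hδ => ?_
    have h1 := key (δ / (C + 1)) (by positivity)
    have h2 : C * (δ / (C + 1)) ≤ δ := by
      rw [div_eq_inv_mul, ← mul_assoc]
      have h3 : C * (C + 1)⁻¹ ≤ 1 := by
        rw [← div_eq_mul_inv, div_le_one (by positivity)]
        linarith
      nlinarith [hδ.le]
    linarith
  have := le_antisymm hfin (norm_nonneg _)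
  rwa [norm_eq_zero, sub_eq_zero] at this

lemma cutdown_nonneg {a : A} {ε : ℝ} : 0 ≤ cutdown a ε :=
  cfc_nonneg fun t _ => le_max_left _ _

lemma cutdown_cuntz (a q : A) (ha : 0 ≤ a) (hq : 0 ≤ q) {ε : ℝ} (hε : 0 < ε)
    (hle : a ≤ q + algebraMap ℝ A ε) : CuntzSub (cutdown a ε) q := by
  have ha_sa : IsSelfAdjoint a := .of_nonneg ha
  have hle' : a - algebraMap ℝ A ε ≤ q := sub_le_iff_le_add.mpr hle
  -- the cut function
  set mf : ℝ → ℝ := fun t => max 0 (t - ε) with hmf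
  have hmf_cont : Continuous mf := continuous_const.max (by fun_prop)
  have hmf_nonneg : ∀ t, 0 ≤ mf t := fun t => le_max_left _ _
  have key : ∀ δ : ℝ, 0 < δ →
      CuntzSub (cfc (fun t => mf t / (mf t + δ) * (t - ε)) a) q ∧
      ‖cutdown a ε - cfc (fun t => mf t / (mf t + δ) * (t - ε)) a‖ ≤ δ := by
    intro δ hδ
    set zf : ℝ → ℝ := fun t => mf t / (mf t + δ) * (t - ε) with hzf
    have hzf_cont : Continuous zf := by
      apply Continuous.mul _ (by fun_prop)
      exact hmf_cont.div (hmf_cont.add continuous_const)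
        fun t => by have := hmf_nonneg t; positivity
    set uf : ℝ → ℝ := fun t => Real.sqrt (mf t / (mf t + δ)) with huf
    have huf_cont : Continuous uf := by
      apply Real.continuous_sqrt.comp
      exact hmf_cont.div (hmf_cont.add continuous_const)
        fun t => by have := hmf_nonneg t; positivity
    have huu : ∀ t, uf t * uf t = mf t / (mf t + δ) :=
      fun t => Real.mul_self_sqrt (by have := hmf_nonneg t; positivity)
    set u : A := cfc uf a with hu
    have hu_sa : IsSelfAdjoint u := cfc_predicate uf a
    set z : A := cfc zf a with hz
    -- z = u * (a - ε) * u
    have hz_eq : z = u * (a - algebraMap ℝ A ε) * u := by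
      have h1 : a - algebraMap ℝ A ε = cfc (fun t : ℝ => t - ε) a := by
        rw [cfc_sub (fun t : ℝ => t) (fun _ : ℝ => ε) a continuousOn_id continuousOn_const,
          cfc_id' ℝ a, cfc_const ε a]
      rw [h1, hu, ← cfc_mul uf (fun t : ℝ => t - ε) a huf_cont.continuousOn (by fun_prop),
        ← cfc_mul _ uf a (by fun_prop) huf_cont.continuousOn]
      apply cfc_congr
      intro t _
      show zf t = uf t * (t - ε) * uf t
      have : uf t * (t - ε) * uf t = uf t * uf t * (t - ε) := by ring
      rw [this, huu t, hzf]
    have hz_nonneg : 0 ≤ z := by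
      apply cfc_nonneg
      intro t _
      rcases le_or_gt t ε with h | h
      · have : mf t = 0 := max_eq_left (by linarith)
        simp [hzf, this]
      · have h0 : 0 ≤ mf t := hmf_nonneg t
        have h1 : 0 ≤ t - ε := by linarith
        have := hmf_nonneg t
        positivity
    have hz_le : z ≤ u * q * u := by
      rw [hz_eq]
      exact hu_sa.conjugate_le_conjugate hle'
    have huqu_nonneg : 0 ≤ u * q * u := le_trans hz_nonneg hz_le
    -- z ≾ u q u
    have step1 : CuntzSub z (u * q * u) := by
      have h1 : CFC.sqrt z * star (CFC.sqrt z) = z := by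
        rw [(IsSelfAdjoint.of_nonneg (CFC.sqrt_nonneg z)).star_eq, CFC.sqrt_mul_sqrt_self z hz_nonneg]
      have h2 : star (CFC.sqrt z) * CFC.sqrt z ≤ u * q * u := by
        rw [(IsSelfAdjoint.of_nonneg (CFC.sqrt_nonneg z)).star_eq, CFC.sqrt_mul_sqrt_self z hz_nonneg]
        exact hz_le
      have := cuntz_of_le (CFC.sqrt z) (u * q * u) huqu_nonneg h2
      rwa [h1] at this
    -- u q u ≾ q
    have step2 : CuntzSub (u * q * u) q := by
      have hsq : IsSelfAdjoint (CFC.sqrt q) := .of_nonneg (CFC.sqrt_nonneg q)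
      have h1 : (u * CFC.sqrt q) * star (u * CFC.sqrt q) = u * q * u := by
        rw [star_mul, hsq.star_eq, hu_sa.star_eq]
        calc u * CFC.sqrt q * (CFC.sqrt q * u) = u * (CFC.sqrt q * CFC.sqrt q) * u := by
              noncomm_ring
          _ = u * q * u := by rw [CFC.sqrt_mul_sqrt_self q hq]
      have h2 : star (u * CFC.sqrt q) * (u * CFC.sqrt q) ≤ q := by
        rw [star_mul, hsq.star_eq, hu_sa.star_eq]
        have huu_le : u * u ≤ 1 := by
          rw [hu, ← cfc_mul uf uf a huf_cont.continuousOn huf_cont.continuousOn]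
          apply cfc_le_one
          intro t _
          rw [huu t]
          have h0 := hmf_nonneg t
          rw [div_le_one (by positivity)]
          linarith
        calc CFC.sqrt q * u * (u * CFC.sqrt q) = CFC.sqrt q * (u * u) * CFC.sqrt q := by
              noncomm_ring
          _ ≤ CFC.sqrt q * 1 * CFC.sqrt q := hsq.conjugate_le_conjugate huu_le
          _ = q := by rw [mul_one, CFC.sqrt_mul_sqrt_self q hq]
      have := cuntz_of_le (u * CFC.sqrt q) q hq h2
      rwa [h1] at this
    refine ⟨cuntz_trans step1 step2, ?_⟩
    -- norm estimate
    rw [cutdown, hz, ← cfc_sub _ _ a hmf_cont.continuousOn hzf_cont.continuousOn]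
    refine norm_cfc_le hδ.le fun t _ => ?_
    rw [Real.norm_eq_abs]
    rcases le_or_gt t ε with h | h
    · have h0 : mf t = 0 := max_eq_left (by linarith)
      simp [hzf, h0]
      positivity
    · have h0 : mf t = t - ε := max_eq_right (by linarith)
      have h1 : 0 < t - ε := by linarith
      rw [hzf]
      simp only [h0]
      have h2 : t - ε - (t - ε) / (t - ε + δ) * (t - ε) = δ * (t - ε) / (t - ε + δ) := by
        field_simp
        ring
      rw [h2, abs_of_nonneg (by positivity), div_le_iff₀ (by positivity)]
      nlinarith
  -- take the limit
  apply cuntz_of_tendsto (fun k : ℕ => cfc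
    (fun t => mf t / (mf t + (1 : ℝ) / (k + 1)) * (t - ε)) a)
    (fun k => (key (1 / (k + 1)) (by positivity)).1)
  rw [tendsto_iff_dist_tendsto_zero]
  refine squeeze_zero (fun n => dist_nonneg) (fun n => ?_)
    tendsto_one_div_add_atTop_nhds_zero_nat
  rw [dist_comm, dist_eq_norm]
  exact (key (1 / (n + 1)) (by positivity)).2

lemma diag2_tendsto {φ : ℕ → A} {α : A} (hφ : Tendsto φ atTop (𝓝 α)) :
    Tendsto (fun n => diag2 (φ n) 0) atTop (𝓝 (diag2 α 0)) := by
  refine tendsto_pi_nhds.mpr ?_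
  intro i
  rw [tendsto_pi_nhds]
  intro j
  fin_cases i <;> fin_cases j <;>
    simp only [diag2, Matrix.of_apply, Matrix.cons_val', Matrix.cons_val_zero,
      Matrix.cons_val_one, Matrix.head_cons, Matrix.empty_val', Matrix.cons_val_fin_one,
      Matrix.head_fin_const] <;>
    first
      | exact hφ
      | exact tendsto_const_nhds

lemma row_mul_diag2 (u v β g : A) :
    (Matrix.of ![![u, v], ![0, 0]]) * diag2 β g * star (Matrix.of ![![u, v], ![0, 0]])
      = diag2 (u * β * star u + v * g * star v) 0 := by
  ext i j
  rw [Matrix.star_eq_conjTranspose]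
  fin_cases i <;> fin_cases j <;>
    simp [diag2, Matrix.mul_apply, Fin.sum_univ_two, mul_assoc]

lemma algebraMap_mono' {r s : ℝ} (h : r ≤ s) : algebraMap ℝ A r ≤ algebraMap ℝ A s := by
  rw [← sub_nonneg, ← map_sub, Algebra.algebraMap_eq_smul_one]
  exact smul_nonneg (by linarith) zero_le_one

/-- L7 : `(x x* - ε)₊ ≾ (x* x - ε)₊`. -/
lemma cutdown_mul_star_cuntz (x : A) {ε : ℝ} (hε : 0 < ε) :
    CuntzSub (cutdown (x * star x) ε) (cutdown (star x * x) ε) := by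
  have sa1 : IsSelfAdjoint (x * star x) := .of_nonneg (mul_star_self_nonneg x)
  set F : ℝ → ℝ := fun t => max 0 (t - ε) / max t ε with hF
  have hmax_pos : ∀ t : ℝ, 0 < max t ε := fun t => lt_of_lt_of_le hε (le_max_right t ε)
  have hF_cont : Continuous F := by
    apply Continuous.div (by fun_prop) (by fun_prop)
    exact fun t => ne_of_gt (hmax_pos t)
  have hF_nonneg : ∀ t, 0 ≤ F t := fun t =>
    div_nonneg (le_max_left _ _) (hmax_pos t).le
  have hFval : ∀ t : ℝ, t * F t = max 0 (t - ε) := by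
    intro t
    rcases le_or_gt t ε with h | h
    · have h0 : max 0 (t - ε) = 0 := max_eq_left (by linarith)
      simp [hF, h0]
    · have h0 : max 0 (t - ε) = t - ε := max_eq_right (by linarith)
      have h1 : max t ε = t := max_eq_left h.le
      have ht : t ≠ 0 := ne_of_gt (lt_trans hε h)
      rw [hF]
      simp only [h0, h1]
      field_simp
  set sF : ℝ → ℝ := fun t => Real.sqrt (F t) with hsF
  have hsF_cont : Continuous sF := Real.continuous_sqrt.comp hF_cont
  have hss : ∀ t, sF t * sF t = F t := fun t => Real.mul_self_sqrt (hF_nonneg t)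
  set w : A := cfc sF (x * star x) * x with hw
  have hsf_sa : IsSelfAdjoint (cfc sF (x * star x)) := cfc_predicate _ _
  have hww : star w * w = cutdown (star x * x) ε := by
    rw [hw, star_mul, hsf_sa.star_eq]
    have h1 : star x * cfc sF (x * star x) * (cfc sF (x * star x) * x)
        = star x * (cfc sF (x * star x) * cfc sF (x * star x)) * x := by noncomm_ring
    rw [h1, ← cfc_mul sF sF _ hsF_cont.continuousOn hsF_cont.continuousOn]
    have h2 : cfc (fun t => sF t * sF t) (x * star x) = cfc F (x * star x) :=
      cfc_congr fun t _ => hss t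
    rw [h2, star_mul_cfc_mul x F hF_cont, cutdown]
    exact cfc_congr fun t _ => hFval t
  have hwws : w * star w = cutdown (x * star x) ε := by
    rw [hw, star_mul, hsf_sa.star_eq]
    have h1 : cfc sF (x * star x) * x * (star x * cfc sF (x * star x))
        = cfc sF (x * star x) * (x * star x) * cfc sF (x * star x) := by noncomm_ring
    rw [h1]
    have hm1 : ContinuousOn (fun t : ℝ => sF t * t) (spectrum ℝ (x * star x)) :=
      hsF_cont.continuousOn.mul continuousOn_id
    have h3 : cfc sF (x * star x) * (x * star x) * cfc sF (x * star x)
        = cfc (fun t => sF t * t * sF t) (x * star x) := by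
      rw [cfc_mul _ sF _ hm1 hsF_cont.continuousOn,
        cfc_mul sF (fun t : ℝ => t) _ hsF_cont.continuousOn continuousOn_id, cfc_id' ℝ (x * star x) sa1]
    rw [h3, cutdown]
    apply cfc_congr
    intro t _
    show sF t * t * sF t = max 0 (t - ε)
    calc sF t * t * sF t = t * (sF t * sF t) := by ring
      _ = t * F t := by rw [hss t]
      _ = max 0 (t - ε) := hFval t
  have := cuntz_of_le w (cutdown (star x * x) ε) cutdown_nonneg (le_of_eq hww)
  rwa [hwws] at this


end CuntzLemmaAux

end Aux

open CuntzLemmaAux in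
/-- Lemma 12.1.5 of [GKPT18].  Let `A` be a (unital) C*-algebra, let
`a ∈ A₊` with `‖a‖ ≤ 1`, let `ε > 0`, and let `g ∈ A` with `0 ≤ g ≤ 1`.  Then
`(a - ε)₊ ≾_A ((1-g)a(1-g) - ε)₊ ⊕ g` in `M₂(A)`. -/
theorem cutdown_cuntzSub_corner {A : Type*} [CStarAlgebra A]
    [PartialOrder A] [StarOrderedRing A]
    (a : A) (ha : 0 ≤ a) (hnorm : ‖a‖ ≤ 1) (ε : ℝ) (hε : 0 < ε)
    (g : A) (hg0 : 0 ≤ g) (hg1 : g ≤ 1) :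
    CuntzSub (diag2 (cutdown a ε) 0)
      (diag2 (cutdown ((1 - g) * a * (1 - g)) ε) g) := by
  have ha_sa : IsSelfAdjoint a := .of_nonneg ha
  set s := CFC.sqrt a with hs_def
  have hs0 : 0 ≤ s := CFC.sqrt_nonneg a
  have hs_sa : IsSelfAdjoint s := .of_nonneg hs0
  have hss : s * s = a := CFC.sqrt_mul_sqrt_self a ha
  set k : A := 1 - g with hk
  have hk0 : 0 ≤ k := sub_nonneg.mpr hg1
  have hk_sa : IsSelfAdjoint k := .of_nonneg hk0
  have hk1 : k ≤ 1 := by rw [hk]; exact sub_le_self 1 hg0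
  set x := s * k with hx
  have hstarx : star x = k * s := by rw [hx, star_mul, hk_sa.star_eq, hs_sa.star_eq]
  have hxsx : star x * x = k * a * k := by rw [hstarx, hx, ← hss]; noncomm_ring
  set p := x * star x with hp
  have hp0 : 0 ≤ p := mul_star_self_nonneg x
  have hp_eq : p = s * (k * k) * s := by rw [hp, hx, hstarx]; noncomm_ring
  have ha1 : a ≤ 1 := (CStarAlgebra.norm_le_one_iff_of_nonneg a ha).mp hnorm
  have hkk0 : 0 ≤ k * k := by simpa [hk_sa.star_eq] using star_mul_self_nonneg k
  have hkk1 : k * k ≤ 1 := by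
    refine (CStarAlgebra.norm_le_one_iff_of_nonneg (k * k) hkk0).mp ?_
    have hknorm : ‖k‖ ≤ 1 := (CStarAlgebra.norm_le_one_iff_of_nonneg k hk0).mpr hk1
    calc ‖k * k‖ ≤ ‖k‖ * ‖k‖ := norm_mul_le _ _
      _ ≤ 1 := by nlinarith [norm_nonneg k]
  set h0 : A := 1 - k * k with hh0def
  have hh0 : 0 ≤ h0 := sub_nonneg.mpr hkk1
  have hh0_le : h0 ≤ g + g := by
    have hgg : g + g - h0 = g * g := by rw [hh0def, hk]; noncomm_ring
    have h2 : (0 : A) ≤ g * g := by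
      simpa [(IsSelfAdjoint.of_nonneg hg0).star_eq] using star_mul_self_nonneg g
    exact sub_nonneg.mp (hgg ▸ h2)
  set rh := CFC.sqrt h0 with hrh
  have hrh0 : 0 ≤ rh := CFC.sqrt_nonneg h0
  have hrh_sa : IsSelfAdjoint rh := .of_nonneg hrh0
  have hrr : rh * rh = h0 := CFC.sqrt_mul_sqrt_self h0 hh0
  have hshs_eq : s * h0 * s = (s * rh) * star (s * rh) := by
    rw [star_mul, hrh_sa.star_eq, hs_sa.star_eq, ← hrr]; noncomm_ring
  have hshs0 : 0 ≤ s * h0 * s := hshs_eq ▸ mul_star_self_nonneg (s * rh)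
  have hdecomp : a = p + s * h0 * s := by
    rw [hp_eq, hh0def, ← hss]; noncomm_ring
  set q : A := cutdown p ε + s * h0 * s with hq_def
  have hq0 : 0 ≤ q := add_nonneg cutdown_nonneg hshs0
  have hp_sa : IsSelfAdjoint p := .of_nonneg hp0
  have hdiff : p - cutdown p ε = cfc (fun t : ℝ => t - max 0 (t - ε)) p := by
    rw [cfc_sub (fun t : ℝ => t) _ p continuousOn_id (by fun_prop), cfc_id' ℝ p hp_sa, cutdown]
  have hdiff_norm : ‖p - cutdown p ε‖ ≤ ε := by
    rw [hdiff]
    refine norm_cfc_le hε.le fun t ht => ?_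
    have ht0 : 0 ≤ t := spectrum_nonneg_of_nonneg hp0 ht
    rw [Real.norm_eq_abs]
    rcases le_or_gt t ε with h | h
    · rw [max_eq_left (by linarith), sub_zero, abs_of_nonneg (by linarith)]; linarith
    · rw [max_eq_right (by linarith)]
      have : t - (t - ε) = ε := by ring
      rw [this, abs_of_nonneg hε.le]
  have hdiff_sa : IsSelfAdjoint (p - cutdown p ε) :=
    hp_sa.sub (IsSelfAdjoint.of_nonneg cutdown_nonneg)
  have hle : a ≤ q + algebraMap ℝ A ε := by
    have h1 : p - cutdown p ε ≤ algebraMap ℝ A ε :=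
      le_trans (IsSelfAdjoint.le_algebraMap_norm_self hdiff_sa) (algebraMap_mono' hdiff_norm)
    calc a = p + s * h0 * s := hdecomp
      _ = (cutdown p ε + s * h0 * s) + (p - cutdown p ε) := by abel
      _ ≤ (cutdown p ε + s * h0 * s) + algebraMap ℝ A ε := add_le_add le_rfl h1
      _ = q + algebraMap ℝ A ε := by rw [hq_def]
  have h_main : CuntzSub (cutdown a ε) q := cutdown_cuntz a q ha hq0 hε hle
  set β := cutdown (star x * x) ε with hβ
  have h_p : CuntzSub (cutdown p ε) β := by rw [hβ, hp]; exact cutdown_mul_star_cuntz x hε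
  have h_shs : CuntzSub (s * h0 * s) g := by
    have t1 : CuntzSub (s * h0 * s) h0 := by
      have hww : star (s * rh) * (s * rh) ≤ h0 := by
        rw [star_mul, hrh_sa.star_eq, hs_sa.star_eq]
        calc rh * s * (s * rh) = rh * (s * s) * rh := by noncomm_ring
          _ = rh * a * rh := by rw [hss]
          _ ≤ rh * 1 * rh := hrh_sa.conjugate_le_conjugate ha1
          _ = h0 := by rw [mul_one, hrr]
      have := cuntz_of_le (s * rh) h0 hh0 hww
      rwa [← hshs_eq] at this
    have t2 : CuntzSub h0 (g + g) := by
      have h2 : star rh * rh ≤ g + g := by rw [hrh_sa.star_eq, hrr]; exact hh0_le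
      have := cuntz_of_le rh (g + g) (add_nonneg hg0 hg0) h2
      rwa [hrh_sa.star_eq, hrr] at this
    have t3 : CuntzSub (g + g) g := by
      refine ⟨fun _ => (Real.sqrt 2 : ℝ) • 1, ?_⟩
      have h22 : (Real.sqrt 2 : ℝ) * Real.sqrt 2 = 2 := Real.mul_self_sqrt (by norm_num)
      have hcalc : ((Real.sqrt 2 : ℝ) • (1 : A)) * g * star ((Real.sqrt 2 : ℝ) • (1 : A))
          = g + g := by
        rw [star_smul, star_one, star_trivial]
        simp only [smul_mul_assoc, mul_smul_comm, one_mul, mul_one, smul_smul, h22]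
        exact two_smul ℝ g
      rw [show (fun _ : ℕ => ((Real.sqrt 2 : ℝ) • (1 : A)) * g *
          star ((Real.sqrt 2 : ℝ) • (1 : A))) = fun _ : ℕ => g + g from funext fun _ => hcalc]
      exact tendsto_const_nhds
    exact cuntz_trans (cuntz_trans t1 t2) t3
  obtain ⟨c, hc⟩ := h_main
  obtain ⟨d, hd⟩ := h_p
  obtain ⟨e, he⟩ := h_shs
  have key : ∀ n : ℕ, ∃ uv : A × A,
      dist (uv.1 * β * star uv.1 + uv.2 * g * star uv.2) (c n * q * star (c n))
        ≤ 1 / (n + 1) := by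
    intro n
    have ht : Tendsto (fun m => c n * (d m * β * star (d m)) * star (c n)
        + c n * (e m * g * star (e m)) * star (c n)) atTop
        (𝓝 (c n * cutdown p ε * star (c n) + c n * (s * h0 * s) * star (c n))) :=
      ((hd.const_mul (c n)).mul_const (star (c n))).add
        ((he.const_mul (c n)).mul_const (star (c n)))
    have heq : c n * cutdown p ε * star (c n) + c n * (s * h0 * s) * star (c n)
        = c n * q * star (c n) := by rw [hq_def]; noncomm_ring
    rw [heq] at ht
    obtain ⟨N, hN⟩ := Metric.tendsto_atTop.mp ht (1 / (n + 1)) (by positivity)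
    refine ⟨(c n * d N, c n * e N), ?_⟩
    have harr : (c n * d N) * β * star (c n * d N) + (c n * e N) * g * star (c n * e N)
        = c n * (d N * β * star (d N)) * star (c n)
          + c n * (e N * g * star (e N)) * star (c n) := by
      rw [star_mul, star_mul]; noncomm_ring
    rw [harr]
    exact (hN N le_rfl).le
  choose uv huv using key
  have hφ : Tendsto (fun n => (uv n).1 * β * star (uv n).1 + (uv n).2 * g * star (uv n).2)
      atTop (𝓝 (cutdown a ε)) := by
    rw [tendsto_iff_dist_tendsto_zero]
    refine squeeze_zero (fun n => dist_nonneg)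
      (fun n => (dist_triangle _ (c n * q * star (c n)) (cutdown a ε)).trans
        (add_le_add (huv n) le_rfl)) ?_
    have := tendsto_one_div_add_atTop_nhds_zero_nat.add (tendsto_iff_dist_tendsto_zero.mp hc)
    simpa using this
  refine ⟨fun n => Matrix.of ![![(uv n).1, (uv n).2], ![0, 0]], ?_⟩
  rw [← hxsx, ← hβ]
  rw [show (fun n : ℕ => (Matrix.of ![![(uv n).1, (uv n).2], ![0, 0]]) * diag2 β g *
      star (Matrix.of ![![(uv n).1, (uv n).2], ![0, 0]]))
      = fun n => diag2 ((uv n).1 * β * star (uv n).1 + (uv n).2 * g * star (uv n).2) 0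
    from funext fun n => row_mul_diag2 _ _ _ _]
  exact diag2_tendsto hφ
end
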